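/- For a 1D cluster of six qubits a,…,f (part of a longer chain) in a cluster state satisfying σ_z^{(a)}σ_x^{(b)}σ_z^{(c)}ψ=ψ, σ_z^{(b)}σ_x^{(c)}σ_z^{(d)}ψ=ψ, σ_z^{(c)}σ_x^{(d)}σ_z^{(e)}ψ=ψ, σ_z^{(d)}σ_x^{(e)}σ_z^{(f)}ψ=ψ, measuring σ_x on qubits c and d with outcomes s_c, s_d yields a state ψ' satisfying σ_z^{(a)}σ_x^{(b)}σ_z^{(e)}ψ' = (−1)^{s_d}ψ' and σ_z^{(b)}σ_x^{(e)}σ_z^{(f)}ψ' = (−1)^{s_c}ψ', i.e. the post-measurement state obeys the defining relations of a cluster state with qubits c,d removed and b,e adjacent. -/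
import Mathlib


open Matrix

variable {V : Type*} [Fintype V] [DecidableEq V]

/-- The Pauli operator `σ_x^{(q)}` acting on qubit `q` of `(ℂ²)^{⊗V}`. -/
noncomputable def PX (q : V) : Matrix (V → Fin 2) (V → Fin 2) ℂ :=
  Matrix.of fun f g => if Function.update f q (g q) = g ∧ f q ≠ g q then 1 else 0

/-- The Pauli operator `σ_z^{(q)}` acting on qubit `q` of `(ℂ²)^{⊗V}`. -/
noncomputable def PZ (q : V) : Matrix (V → Fin 2) (V → Fin 2) ℂ :=
  Matrix.diagonal fun f => if f q = 1 then -1 else 1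

/-- The projector `P^{(q)}_{x,s} = (1+(−1)^s σ_x^{(q)})/2` describing a
`σ_x`-measurement on qubit `q` with outcome `s`. -/
noncomputable def Pm (q : V) (s : ℕ) : Matrix (V → Fin 2) (V → Fin 2) ℂ :=
  ((2 : ℂ))⁻¹ • (1 + ((-1 : ℂ) ^ s) • PX q)
def flipq (q : V) (g : V → Fin 2) : V → Fin 2 := Function.update g q (g q + 1)

noncomputable def sgn (q : V) (g : V → Fin 2) : ℂ := if g q = 1 then -1 else 1

lemma flipq_apply_self (q : V) (g : V → Fin 2) : flipq q g q = g q + 1 :=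
  Function.update_self _ _ _

lemma flipq_apply_ne {p q : V} (h : p ≠ q) (g : V → Fin 2) : flipq q g p = g p :=
  Function.update_of_ne h _ _

lemma flipq_flipq (q : V) (g : V → Fin 2) : flipq q (flipq q g) = g := by
  have h2 : ∀ y : Fin 2, y + 1 + 1 = y := by decide
  funext x
  by_cases hx : x = q
  · subst hx
    rw [flipq_apply_self, flipq_apply_self, h2]
  · rw [flipq_apply_ne hx, flipq_apply_ne hx]

lemma flipq_comm {p q : V} (h : p ≠ q) (g : V → Fin 2) :
    flipq p (flipq q g) = flipq q (flipq p g) := by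
  unfold flipq
  rw [Function.update_of_ne h, Function.update_of_ne h.symm, Function.update_comm h]

lemma sgn_flipq_ne {p q : V} (h : p ≠ q) (g : V → Fin 2) : sgn p (flipq q g) = sgn p g := by
  unfold sgn
  rw [flipq_apply_ne h]

lemma sgn_sq (q : V) (g : V → Fin 2) : sgn q g * sgn q g = 1 := by
  unfold sgn; split <;> norm_num

lemma PX_mulVec (q : V) (ψ : (V → Fin 2) → ℂ) :
    (PX q).mulVec ψ = fun g => ψ (flipq q g) := by
  funext g
  have key : ∀ x : V → Fin 2, PX q g x = if x = flipq q g then 1 else 0 := by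
    intro x
    unfold PX
    simp only [Matrix.of_apply]
    refine if_congr ?_ rfl rfl
    constructor
    · rintro ⟨h1, h2⟩
      have hx : x q = g q + 1 := by
        revert h2; generalize g q = u; generalize x q = v; revert u v; decide
      rw [← h1, hx]; rfl
    · rintro rfl
      refine ⟨?_, ?_⟩
      · rw [flipq_apply_self]; rfl
      · rw [flipq_apply_self]
        revert g; intro g; generalize g q = u; revert u; decide
  simp only [Matrix.mulVec, dotProduct, key, ite_mul, one_mul, zero_mul]
  rw [Finset.sum_ite_eq' Finset.univ]
  simp

lemma PZ_mulVec (q : V) (ψ : (V → Fin 2) → ℂ) :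
    (PZ q).mulVec ψ = fun g => sgn q g * ψ g := by
  funext g
  simp [PZ, sgn, Matrix.mulVec_diagonal]

lemma Pm_mulVec (q : V) (s : ℕ) (ψ : (V → Fin 2) → ℂ) :
    (Pm q s).mulVec ψ = fun g => 2⁻¹ * (ψ g + (-1 : ℂ) ^ s * ψ (flipq q g)) := by
  funext g
  unfold Pm
  rw [Matrix.smul_mulVec, Matrix.add_mulVec, Matrix.one_mulVec,
    Matrix.smul_mulVec, PX_mulVec]
  simp [smul_eq_mul]

lemma Pm_comm {c d : V} (h : c ≠ d) (sc sd : ℕ) (ψ : (V → Fin 2) → ℂ) :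
    (Pm c sc).mulVec ((Pm d sd).mulVec ψ) = (Pm d sd).mulVec ((Pm c sc).mulVec ψ) := by
  funext g
  simp only [Pm_mulVec]
  rw [flipq_comm h.symm g]
  ring

lemma main_step {m m' p q r : V} (sm sm' : ℕ) (ψ : (V → Fin 2) → ℂ)
    (hpm : p ≠ m) (hpm' : p ≠ m') (hqm : q ≠ m) (hqm' : q ≠ m')
    (hrm : r ≠ m) (hrm' : r ≠ m') (hmm' : m ≠ m')
    (H : ∀ g, sgn p g * sgn q g * ψ (flipq m (flipq r g)) = ψ g) (g : V → Fin 2) :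
    sgn p g * sgn q g * ((Pm m' sm').mulVec ((Pm m sm).mulVec ψ)) (flipq r g)
      = (-1 : ℂ) ^ sm * ((Pm m' sm').mulVec ((Pm m sm).mulVec ψ)) g := by
  have E1 := H g
  have E2 := H (flipq m g)
  rw [sgn_flipq_ne hpm, sgn_flipq_ne hqm, flipq_comm hrm, flipq_flipq] at E2
  have E3 := H (flipq m' g)
  rw [sgn_flipq_ne hpm', sgn_flipq_ne hqm', flipq_comm hrm'] at E3
  have E4 := H (flipq m (flipq m' g))
  rw [sgn_flipq_ne hpm, sgn_flipq_ne hpm', sgn_flipq_ne hqm, sgn_flipq_ne hqm',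
    flipq_comm hrm, flipq_flipq, flipq_comm hrm'] at E4
  have hw : (-1 : ℂ) ^ sm * (-1 : ℂ) ^ sm = 1 := by
    rw [← pow_add, ← two_mul, pow_mul]; norm_num
  simp only [Pm_mulVec]
  linear_combination (4⁻¹ : ℂ) * E2 + 4⁻¹ * (-1 : ℂ)^sm * E1 + 4⁻¹ * (-1 : ℂ)^sm' * E4
    + 4⁻¹ * (-1 : ℂ)^sm * (-1 : ℂ)^sm' * E3
    - 4⁻¹ * (ψ (flipq m g) + (-1 : ℂ)^sm' * ψ (flipq m (flipq m' g))) * hw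


/-- For six qubits `a,…,f` of a 1D cluster satisfying the chain cluster-state
correlations, measuring `σ_x` on qubits `c` and `d` with outcomes `s_c, s_d`
yields a state `ψ'` obeying the defining relations of a cluster state with
qubits `c, d` removed and `b, e` adjacent:
`σ_z^{(a)}σ_x^{(b)}σ_z^{(e)}ψ' = (−1)^{s_d}ψ'` and
`σ_z^{(b)}σ_x^{(e)}σ_z^{(f)}ψ' = (−1)^{s_c}ψ'`. -/
theorem remove_measured_qubits_from_chain
    (a b c d e f : V)
    (hdist : List.Pairwise (· ≠ ·) [a, b, c, d, e, f])
    (ψ : (V → Fin 2) → ℂ) (sc sd : ℕ)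
    (h1 : (PZ a * PX b * PZ c).mulVec ψ = ψ)
    (h2 : (PZ b * PX c * PZ d).mulVec ψ = ψ)
    (h3 : (PZ c * PX d * PZ e).mulVec ψ = ψ)
    (h4 : (PZ d * PX e * PZ f).mulVec ψ = ψ) :
    (PZ a * PX b * PZ e).mulVec ((Pm c sc * Pm d sd).mulVec ψ) =
      ((-1 : ℂ) ^ sd) • (Pm c sc * Pm d sd).mulVec ψ ∧
    (PZ b * PX e * PZ f).mulVec ((Pm c sc * Pm d sd).mulVec ψ) =
      ((-1 : ℂ) ^ sc) • (Pm c sc * Pm d sd).mulVec ψ := by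
  simp only [List.pairwise_cons, List.mem_cons, List.not_mem_nil, List.mem_singleton,
    forall_eq_or_imp, forall_eq, List.Pairwise.nil, and_true, or_false] at hdist
  obtain ⟨⟨hab, hac, had, hae, haf⟩, ⟨hbc, hbd, hbe, hbf⟩, ⟨hcd, hce, hcf⟩, ⟨hde, hdf⟩, hef, -⟩ :=
    hdist
  -- pointwise forms of the hypotheses
  have h1' : ∀ g, sgn a g * (sgn c g * ψ (flipq b g)) = ψ g := by
    intro g
    have := congrFun h1 g
    simp only [← Matrix.mulVec_mulVec, PZ_mulVec, PX_mulVec, sgn_flipq_ne hbc.symm] at this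
    exact this
  have h2' : ∀ g, sgn b g * (sgn d g * ψ (flipq c g)) = ψ g := by
    intro g
    have := congrFun h2 g
    simp only [← Matrix.mulVec_mulVec, PZ_mulVec, PX_mulVec, sgn_flipq_ne hcd.symm] at this
    exact this
  have h3' : ∀ g, sgn c g * (sgn e g * ψ (flipq d g)) = ψ g := by
    intro g
    have := congrFun h3 g
    simp only [← Matrix.mulVec_mulVec, PZ_mulVec, PX_mulVec, sgn_flipq_ne hde.symm] at this
    exact this
  have h4' : ∀ g, sgn d g * (sgn f g * ψ (flipq e g)) = ψ g := by
    intro g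
    have := congrFun h4 g
    simp only [← Matrix.mulVec_mulVec, PZ_mulVec, PX_mulVec, sgn_flipq_ne hef.symm] at this
    exact this
  -- combined correlations
  have H13 : ∀ g, sgn a g * sgn e g * ψ (flipq d (flipq b g)) = ψ g := by
    intro g
    have A := h1' g
    have B := h3' (flipq b g)
    rw [sgn_flipq_ne hbc.symm, sgn_flipq_ne hbe.symm] at B
    linear_combination A + sgn a g * sgn c g * B
      - sgn a g * sgn e g * ψ (flipq d (flipq b g)) * sgn_sq c g
  have H24 : ∀ g, sgn b g * sgn f g * ψ (flipq c (flipq e g)) = ψ g := by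
    intro g
    have A := h2' g
    have B := h4' (flipq c g)
    rw [sgn_flipq_ne hcd.symm, sgn_flipq_ne hcf.symm, flipq_comm hce.symm] at B
    linear_combination A + sgn b g * sgn d g * B
      - sgn b g * sgn f g * ψ (flipq c (flipq e g)) * sgn_sq d g
  constructor
  · funext g
    simp only [← Matrix.mulVec_mulVec, PZ_mulVec, PX_mulVec, sgn_flipq_ne hbe.symm,
      Pi.smul_apply, smul_eq_mul]
    have := main_step (m := d) (m' := c) (p := a) (q := e) (r := b) sd sc ψ
      had hac hde.symm hce.symm hbd hbc hcd.symm H13 g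
    linear_combination this
  · funext g
    simp only [← Matrix.mulVec_mulVec, PZ_mulVec, PX_mulVec, sgn_flipq_ne hef.symm,
      Pi.smul_apply, smul_eq_mul, Pm_comm hcd sc sd ψ]
    have := main_step (m := c) (m' := d) (p := b) (q := f) (r := e) sc sd ψ
      hbc hbd hcf.symm hdf.symm hce.symm hde.symm hcd H24 g
    linear_combination this
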